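/- Let A = [a₁,…,a_n], B = [b₁,…,b_n] ∈ ℝ^{m×n} have unit-norm columns and suppose M_D(A,B) ≠ 1. Then the mutual incoherence of the (column-renormalized) sum satisfies M(A + B) ≤ (M(A) + 2·M_OD(A,B) + M(B)) / (2(1 − M_D(A,B))). -/

import Mathlib

open Classical Kronecker

/-- Number of nonzero entries of a vector. -/
noncomputable def sparsity {n : Type*} (x : n → ℝ) : ℕ := Set.ncard {i | x i ≠ 0}

/-- The spark of a matrix: the minimal number of nonzero entries of a nonzero kernel
vector; if the kernel is trivial we use the convention `spark A = (number of columns) + 1`. -/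
noncomputable def spark {m n : Type*} [Fintype m] [Fintype n] (A : Matrix m n ℝ) : ℕ :=
  if ∃ x : n → ℝ, x ≠ 0 ∧ A.mulVec x = 0 then
    sInf {k | ∃ x : n → ℝ, x ≠ 0 ∧ A.mulVec x = 0 ∧ sparsity x = k}
  else Fintype.card n + 1

/-- Mutual incoherence: the largest absolute inner product of two distinct columns. -/
noncomputable def mutInc {m n : Type*} [Fintype m] (A : Matrix m n ℝ) : ℝ :=
  sSup {v | ∃ i j, i ≠ j ∧ v = |∑ k, A k i * A k j|}

/-- Off-diagonal mutual incoherence of two matrices. -/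
noncomputable def mutIncOD {m n : Type*} [Fintype m] (A B : Matrix m n ℝ) : ℝ :=
  sSup {v | ∃ i j, i ≠ j ∧ v = |∑ k, A k i * B k j|}

/-- Diagonal mutual incoherence of two matrices. -/
noncomputable def mutIncD {m n : Type*} [Fintype m] (A B : Matrix m n ℝ) : ℝ :=
  sSup {v | ∃ i, v = |∑ k, A k i * B k i|}

/-- Mutual incoherence of a matrix whose columns are renormalized. -/
noncomputable def mutIncN {m n : Type*} [Fintype m] (C : Matrix m n ℝ) : ℝ :=
  sSup {v | ∃ i j, i ≠ j ∧
    v = |∑ k, C k i * C k j| /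
        (Real.sqrt (∑ k, (C k i) ^ 2) * Real.sqrt (∑ k, (C k j) ^ 2))}

/-- The `k`-restricted isometry constant of a matrix. -/
noncomputable def ripConst {m n : Type*} [Fintype m] [Fintype n] (k : ℕ)
    (A : Matrix m n ℝ) : ℝ :=
  sInf {δ | 0 ≤ δ ∧ ∀ x : n → ℝ, sparsity x ≤ k →
    (1 - δ) * ∑ i, (x i) ^ 2 ≤ ∑ i, (A.mulVec x i) ^ 2 ∧
    ∑ i, (A.mulVec x i) ^ 2 ≤ (1 + δ) * ∑ i, (x i) ^ 2}

/-- Iterated Kronecker product of a family of matrices (up to the standard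
reindexing of the row/column index sets). -/
noncomputable def kronFamily {N : ℕ} {m n : Fin N → ℕ}
    (A : ∀ i, Matrix (Fin (m i)) (Fin (n i)) ℝ) :
    Matrix (∀ i, Fin (m i)) (∀ i, Fin (n i)) ℝ :=
  fun r c => ∏ i, A i (r i) (c i)


/-!
Expanding `‖a_i + b_i‖² = 2 + 2⟨a_i, b_i⟩ ≥ 2(1 - M_D)` bounds every column norm of `A + B` from
below, while expanding `⟨a_i + b_i, a_j + b_j⟩` into four inner products of distinct columns
bounds the numerator by `M(A) + 2 M_OD(A,B) + M(B)`.
-/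

open Finset

section Incoherence

variable {m n : Type*} [Fintype m]

lemma le_sSup_offDiag [Finite n] (f : n → n → ℝ) {i j : n} (hij : i ≠ j) :
    f i j ≤ sSup {v | ∃ i j, i ≠ j ∧ v = f i j} :=
  le_csSup ((Set.finite_range fun p : n × n => f p.1 p.2).bddAbove.mono
    (by rintro v ⟨i, j, -, rfl⟩; exact ⟨(i, j), rfl⟩)) ⟨i, j, hij, rfl⟩

lemma abs_colInner_le_mutInc [Finite n] (A : Matrix m n ℝ) {i j : n} (hij : i ≠ j) :
    |∑ k, A k i * A k j| ≤ mutInc A :=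
  le_sSup_offDiag (fun i j => |∑ k, A k i * A k j|) hij

lemma abs_colInner_le_mutIncOD [Finite n] (A B : Matrix m n ℝ) {i j : n} (hij : i ≠ j) :
    |∑ k, A k i * B k j| ≤ mutIncOD A B :=
  le_sSup_offDiag (fun i j => |∑ k, A k i * B k j|) hij

lemma abs_colInner_le_mutIncD [Finite n] (A B : Matrix m n ℝ) (i : n) :
    |∑ k, A k i * B k i| ≤ mutIncD A B :=
  le_csSup ((Set.finite_range fun i => |∑ k, A k i * B k i|).bddAbove.mono
    (by rintro v ⟨i, rfl⟩; exact ⟨i, rfl⟩)) ⟨i, rfl⟩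

lemma mutInc_nonneg (A : Matrix m n ℝ) : 0 ≤ mutInc A :=
  Real.sSup_nonneg (by rintro v ⟨i, j, -, rfl⟩; exact abs_nonneg _)

lemma mutIncOD_nonneg (A B : Matrix m n ℝ) : 0 ≤ mutIncOD A B :=
  Real.sSup_nonneg (by rintro v ⟨i, j, -, rfl⟩; exact abs_nonneg _)

variable {A B : Matrix m n ℝ}

lemma mutIncD_le_one (hA : ∀ j, ∑ k, A k j ^ 2 = 1) (hB : ∀ j, ∑ k, B k j ^ 2 = 1) :
    mutIncD A B ≤ 1 := by
  refine Real.sSup_le ?_ zero_le_one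
  rintro v ⟨i, rfl⟩
  have cauchySchwarz := sum_mul_sq_le_sq_mul_sq univ (fun k => A k i) (fun k => B k i)
  rw [hA, hB, one_mul] at cauchySchwarz
  exact (sq_le_one_iff_abs_le_one _).mp cauchySchwarz

lemma colNormSq_add (hA : ∀ j, ∑ k, A k j ^ 2 = 1) (hB : ∀ j, ∑ k, B k j ^ 2 = 1) (l : n) :
    ∑ k, (A + B) k l ^ 2 = 2 + 2 * ∑ k, A k l * B k l := by
  have expand : ∀ k, (A + B) k l ^ 2 = A k l ^ 2 + B k l ^ 2 + 2 * (A k l * B k l) := by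
    intro k; rw [Matrix.add_apply]; ring
  rw [sum_congr rfl fun k _ => expand k, sum_add_distrib, sum_add_distrib, hA, hB, ← mul_sum]
  ring

lemma two_mul_one_sub_mutIncD_le_colNormSq_add [Finite n] (hA : ∀ j, ∑ k, A k j ^ 2 = 1)
    (hB : ∀ j, ∑ k, B k j ^ 2 = 1) (l : n) :
    2 * (1 - mutIncD A B) ≤ ∑ k, (A + B) k l ^ 2 := by
  rw [colNormSq_add hA hB]
  linarith [neg_abs_le (∑ k, A k l * B k l), abs_colInner_le_mutIncD A B l]

lemma colInner_add (A B : Matrix m n ℝ) (i j : n) :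
    ∑ k, (A + B) k i * (A + B) k j =
      ∑ k, A k i * A k j + ∑ k, A k i * B k j + ∑ k, A k j * B k i + ∑ k, B k i * B k j := by
  simp only [← sum_add_distrib, Matrix.add_apply]
  exact sum_congr rfl fun k _ => by ring

lemma abs_colInner_add_le [Finite n] (A B : Matrix m n ℝ) {i j : n} (hij : i ≠ j) :
    |∑ k, (A + B) k i * (A + B) k j| ≤ mutInc A + 2 * mutIncOD A B + mutInc B := by
  rw [colInner_add]
  calc _ ≤ |∑ k, A k i * A k j| + |∑ k, A k i * B k j| + |∑ k, A k j * B k i|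
        + |∑ k, B k i * B k j| := by
        refine (abs_add_le _ _).trans ?_
        gcongr
        refine (abs_add_le _ _).trans ?_
        gcongr
        exact abs_add_le _ _
    _ ≤ mutInc A + mutIncOD A B + mutIncOD A B + mutInc B := by
        gcongr
        exacts [abs_colInner_le_mutInc A hij, abs_colInner_le_mutIncOD A B hij,
          abs_colInner_le_mutIncOD A B hij.symm, abs_colInner_le_mutInc B hij]
    _ = _ := by ring

end Incoherence

lemma le_sqrt_mul_sqrt {c x y : ℝ} (hc : 0 ≤ c) (hx : c ≤ x) (hy : c ≤ y) :
    c ≤ √x * √y :=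
  calc c = √c * √c := (Real.mul_self_sqrt hc).symm
    _ ≤ √x * √y := by gcongr

theorem stmt17 {m n : ℕ} (A B : Matrix (Fin m) (Fin n) ℝ)
    (hA : ∀ j, ∑ k, (A k j) ^ 2 = 1) (hB : ∀ j, ∑ k, (B k j) ^ 2 = 1)
    (hD : mutIncD A B ≠ 1) :
    mutIncN (A + B) ≤
      (mutInc A + 2 * mutIncOD A B + mutInc B) / (2 * (1 - mutIncD A B)) := by
  have hden : 0 < 2 * (1 - mutIncD A B) := by
    linarith [lt_of_le_of_ne (mutIncD_le_one hA hB) hD]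
  have hnum : 0 ≤ mutInc A + 2 * mutIncOD A B + mutInc B := by
    linarith [mutInc_nonneg A, mutIncOD_nonneg A B, mutInc_nonneg B]
  refine Real.sSup_le ?_ (div_nonneg hnum hden.le)
  rintro v ⟨i, j, hij, rfl⟩
  exact div_le_div₀ hnum (abs_colInner_add_le A B hij) hden
    (le_sqrt_mul_sqrt hden.le (two_mul_one_sub_mutIncD_le_colNormSq_add hA hB i)
      (two_mul_one_sub_mutIncD_le_colNormSq_add hA hB j))
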